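/- arXiv:1509.06543 — 2 statements merged into one kernel-verified Lean document; each statement's English description precedes it below -/
import Mathlib

section
/- A unitary operator U on ℂ^n ⊗ ℂ^k satisfies L_{U,β}(ρ) = L_{U,γ}(ρ) for all density matrices β, γ ∈ M_k^{1,+}(ℂ) and all density matrices ρ ∈ M_n^{1,+}(ℂ) if and only if there exist unitaries V on ℂ^n and W on ℂ^k such that U = V ⊗ W. In other words, U_single = {V ⊗ W : V ∈ U_n, W ∈ U_k}. -/
open Matrix Kronecker ComplexOrder

noncomputable section

namespace BipartiteUnitary

/-- A square complex matrix is unitary. -/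
def IsUnitary {m : Type*} [Fintype m] [DecidableEq m] (U : Matrix m m ℂ) : Prop :=
  U * Uᴴ = 1 ∧ Uᴴ * U = 1

/-- A density matrix: positive semidefinite with unit trace. -/
def IsDensity {m : Type*} [Fintype m] (β : Matrix m m ℂ) : Prop :=
  β.PosSemidef ∧ β.trace = 1

/-- Partial trace over the second tensor factor. -/
def trB {n k : Type*} [Fintype k] (M : Matrix (n × k) (n × k) ℂ) : Matrix n n ℂ :=
  fun i j => ∑ s, M (i, s) (j, s)

/-- Partial trace over the first tensor factor. -/
def trA {n k : Type*} [Fintype n] (M : Matrix (n × k) (n × k) ℂ) : Matrix k k ℂ :=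
  fun s t => ∑ i, M (i, s) (i, t)

/-- The quantum channel `L_{U,β}(X) = Tr_B (U (X ⊗ β) U*)`. -/
def channel {n k : Type*} [Fintype n] [Fintype k]
    (U : Matrix (n × k) (n × k) ℂ) (β : Matrix k k ℂ) (X : Matrix n n ℂ) :
    Matrix n n ℂ :=
  trB (U * (X ⊗ₖ β) * Uᴴ)

/-- The partial transpose `X^Γ = (id ⊗ t)(X)` with respect to the second factor. -/
def pt {n k : Type*} (U : Matrix (n × k) (n × k) ℂ) : Matrix (n × k) (n × k) ℂ :=
  fun p q => U (p.1, q.2) (q.1, p.2)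

/-- A family of vectors forming an orthonormal basis of `ℂ^k`. -/
def ONB {k : Type*} [Fintype k] [DecidableEq k] (e : k → k → ℂ) : Prop :=
  ∀ i j, (∑ s, star (e i s) * e j s) = if i = j then (1 : ℂ) else 0

/-- A partial isometry. -/
def IsPartialIso {m : Type*} [Fintype m] [DecidableEq m] (R : Matrix m m ℂ) : Prop :=
  R * Rᴴ * R = R

/-- Membership in `𝒰^A_{block-diag}`: `U = ∑ i, U_i ⊗ e_i f_i*` with `U_i` unitary
and `{e_i}, {f_i}` orthonormal bases of `ℂ^k`. -/
def memUA {n k : ℕ} (U : Matrix (Fin n × Fin k) (Fin n × Fin k) ℂ) : Prop :=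
  ∃ (Us : Fin k → Matrix (Fin n) (Fin n) ℂ) (e f : Fin k → Fin k → ℂ),
    (∀ i, IsUnitary (Us i)) ∧ ONB e ∧ ONB f ∧
    U = ∑ i, Us i ⊗ₖ vecMulVec (e i) (star (f i))

/-- Membership in `ℳ^A_{block-diag}`: `X = ∑ i, X_i ⊗ e_i f_i*` with arbitrary `X_i`. -/
def memMA {n k : ℕ} (X : Matrix (Fin n × Fin k) (Fin n × Fin k) ℂ) : Prop :=
  ∃ (Xs : Fin k → Matrix (Fin n) (Fin n) ℂ) (e f : Fin k → Fin k → ℂ),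
    ONB e ∧ ONB f ∧ X = ∑ i, Xs i ⊗ₖ vecMulVec (e i) (star (f i))

/-- Membership in `𝒰^B_{block-diag}`. -/
def memUB {n k : ℕ} (U : Matrix (Fin n × Fin k) (Fin n × Fin k) ℂ) : Prop :=
  ∃ (Us : Fin n → Matrix (Fin k) (Fin k) ℂ) (e f : Fin n → Fin n → ℂ),
    (∀ i, IsUnitary (Us i)) ∧ ONB e ∧ ONB f ∧
    U = ∑ i, vecMulVec (e i) (star (f i)) ⊗ₖ Us i

/-- Membership in `ℳ^B_{block-diag}`. -/
def memMB {n k : ℕ} (X : Matrix (Fin n × Fin k) (Fin n × Fin k) ℂ) : Prop :=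
  ∃ (Xs : Fin n → Matrix (Fin k) (Fin k) ℂ) (e f : Fin n → Fin n → ℂ),
    ONB e ∧ ONB f ∧ X = ∑ i, vecMulVec (e i) (star (f i)) ⊗ₖ Xs i

/-! If `L_{U,β}` does not depend on the state `β`, then, since density matrices span `M_k`,
`L_{U,B}(X) = tr(B) Φ(X)` for all `B` and a single map `Φ`. Dually, in the Heisenberg
picture, `U* (A ⊗ 1) U = Φ*(A) ⊗ 1`, so conjugation by `U` restricts to a `*`-automorphism
`Φ*` of `M_n`. By Skolem–Noether `Φ*(A) = V A V*` with `V` unitary; then `U (V ⊗ 1)` commutes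
with `M_n ⊗ 1`, hence equals `1 ⊗ W`, and `U = V* ⊗ W`. -/

/-- Skolem–Noether for `*`-automorphisms of `M_m(ℂ)`. -/
theorem exists_mem_unitary_eq_conj {m : Type*} [Fintype m] [DecidableEq m]
    (f : Matrix m m ℂ ≃⋆ₐ[ℂ] Matrix m m ℂ) :
    ∃ V ∈ unitary (Matrix m m ℂ), ∀ A, f A = V * A * star V := by
  let e : Matrix m m ℂ ≃⋆ₐ[ℂ] _ := Matrix.toEuclideanCLM
  let g := (e.symm.trans f).trans e
  obtain ⟨u, hu⟩ := g.eq_linearIsometryEquivConjStarAlgEquiv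
    (LinearMap.continuous_of_finiteDimensional g.toAlgEquiv.toLinearMap)
  let w := Unitary.linearIsometryEquiv.symm u
  refine ⟨e.symm w, Unitary.map_mem e.symm w.2, fun A => ?_⟩
  have hA : g (e A) = Unitary.conjStarAlgAut ℂ _ w (e A) := by
    rw [hu, Unitary.conjStarAlgAut_symm_unitaryLinearIsometryEquiv]
  apply EquivLike.injective e
  rw [map_mul, map_mul, map_star e, e.apply_symm_apply]
  simpa [g] using hA

section Factor

variable {R A B C : Type*} [CommSemiring R] [Semiring A] [Algebra R A] [Star A]
  [Semiring B] [Algebra R B] [Star B] [Semiring C] [Algebra R C] [Star C]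

def StarAlgHom.factor (j : B →⋆ₐ[R] C) (hj : Function.Injective j) (g : A →⋆ₐ[R] C)
    (f : A → B) (hf : ∀ a, j (f a) = g a) : A →⋆ₐ[R] B where
  toFun := f
  map_one' := hj <| by simp only [hf, map_one]
  map_mul' x y := hj <| by simp only [hf, map_mul]
  map_zero' := hj <| by simp only [hf, map_zero]
  map_add' x y := hj <| by simp only [hf, map_add]
  commutes' r := hj <| by simp only [hf, AlgHomClass.commutes]
  map_star' x := hj <| by simp only [hf, map_star]

theorem StarAlgHom.injective_factor (j : B →⋆ₐ[R] C) (hj : Function.Injective j)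
    {g : A →⋆ₐ[R] C} (hg : Function.Injective g) (f : A → B) (hf : ∀ a, j (f a) = g a) :
    Function.Injective (StarAlgHom.factor j hj g f hf) :=
  fun a b hab => hg <| by rw [← hf, ← hf]; exact congrArg j hab

end Factor

section Kronecker

variable {R n k : Type*}

theorem kronecker_one_injective [MulZeroOneClass R] [DecidableEq k] [Nonempty k] :
    Function.Injective (fun A : Matrix n n R => A ⊗ₖ (1 : Matrix k k R)) := by
  intro A B h
  ext a c
  obtain ⟨s⟩ := ‹Nonempty k›
  simpa using congrFun₂ h (a, s) (c, s)

theorem one_kronecker_injective [MulZeroOneClass R] [DecidableEq n] [Nonempty n] :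
    Function.Injective (fun B : Matrix k k R => (1 : Matrix n n R) ⊗ₖ B) := by
  intro A B h
  ext s t
  obtain ⟨a⟩ := ‹Nonempty n›
  simpa using congrFun₂ h (a, s) (a, t)

variable [Fintype n] [Fintype k] [DecidableEq n] [DecidableEq k]

theorem exists_eq_one_kronecker_of_commute [Semiring R] [Nonempty n]
    {P : Matrix (n × k) (n × k) R} (hP : ∀ A : Matrix n n R, Commute P (A ⊗ₖ 1)) :
    ∃ W : Matrix k k R, P = 1 ⊗ₖ W := by
  obtain ⟨i⟩ := ‹Nonempty n›
  refine ⟨of fun s t => P (i, s) (i, t), ?_⟩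
  ext ⟨j, s⟩ ⟨c, t⟩
  have h : (if j = c then P (i, s) (i, t) else 0) = P (j, s) (c, t) := by
    simpa [mul_apply, single_apply, one_apply, Fintype.sum_prod_type, ite_and]
      using congrFun₂ (hP (single i j 1)).eq (i, s) (c, t)
  rw [← h]
  by_cases hjc : j = c <;> simp [hjc, one_apply]

theorem mem_unitary_of_one_kronecker_mem_unitary [CommRing R] [StarRing R] [Nonempty n]
    {W : Matrix k k R} (hW : (1 : Matrix n n R) ⊗ₖ W ∈ unitary (Matrix (n × k) (n × k) R)) :
    W ∈ unitary (Matrix k k R) := by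
  simp only [Unitary.mem_iff, star_eq_conjTranspose, conjTranspose_kronecker, conjTranspose_one,
    ← mul_kronecker_mul, one_mul, ← one_kronecker_one (m := n) (n := k)] at hW ⊢
  exact ⟨one_kronecker_injective hW.1, one_kronecker_injective hW.2⟩

variable (R n k) in
@[simps]
def kroneckerOneStarAlgHom [CommRing R] [StarRing R] :
    Matrix n n R →⋆ₐ[R] Matrix (n × k) (n × k) R where
  toFun A := A ⊗ₖ 1
  map_one' := one_kronecker_one
  map_mul' A B := by rw [← mul_kronecker_mul, mul_one]
  map_zero' := zero_kronecker _
  map_add' A B := add_kronecker _ _ _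
  commutes' r := by simp [Algebra.algebraMap_eq_smul_one, smul_kronecker]
  map_star' A := by simp [star_eq_conjTranspose, conjTranspose_kronecker]

theorem exists_mem_unitary_conj_kronecker_one [Nonempty k] {U : Matrix (n × k) (n × k) ℂ}
    (hU : U ∈ unitary (Matrix (n × k) (n × k) ℂ))
    (h : ∀ A : Matrix n n ℂ, ∃ B, star U * (A ⊗ₖ 1) * U = B ⊗ₖ 1) :
    ∃ V ∈ unitary (Matrix n n ℂ),
      ∀ A, star U * (A ⊗ₖ 1) * U = (V * A * star V) ⊗ₖ 1 := by
  choose N hN using h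
  let j := kroneckerOneStarAlgHom ℂ n k
  let g := (Unitary.conjStarAlgAut ℂ _ (star ⟨U, hU⟩)).toStarAlgHom.comp j
  have hN' A : j (N A) = g A := by simp [g, j, hN]
  let Φ := StarAlgHom.factor j kronecker_one_injective g N hN'
  have hΦ : Function.Injective Φ := StarAlgHom.injective_factor _ _
    ((EquivLike.injective (Unitary.conjStarAlgAut ℂ _ (star ⟨U, hU⟩))).comp
      kronecker_one_injective) N hN'
  obtain ⟨V, hV, hΦV⟩ := exists_mem_unitary_eq_conj (StarAlgEquiv.ofBijective Φ
    ⟨hΦ, (LinearMap.injective_iff_surjective (f := Φ.toAlgHom.toLinearMap)).mp hΦ⟩)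
  exact ⟨V, hV, fun A => by rw [hN]; congr 1; exact hΦV A⟩

theorem exists_eq_kronecker_of_conj_kronecker_one [Nonempty n] [Nonempty k]
    {U : Matrix (n × k) (n × k) ℂ} (hU : U ∈ unitary (Matrix (n × k) (n × k) ℂ))
    (h : ∀ A : Matrix n n ℂ, ∃ B, star U * (A ⊗ₖ 1) * U = B ⊗ₖ 1) :
    ∃ V ∈ unitary (Matrix n n ℂ), ∃ W ∈ unitary (Matrix k k ℂ), U = V ⊗ₖ W := by
  obtain ⟨V, hV, hUV⟩ := exists_mem_unitary_conj_kronecker_one hU h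
  have hP : U * (V ⊗ₖ 1) ∈ unitary (Matrix (n × k) (n × k) ℂ) :=
    mul_mem hU (kronecker_mem_unitary hV (one_mem _))
  have hcomm A : Commute (U * (V ⊗ₖ 1)) (A ⊗ₖ (1 : Matrix k k ℂ)) := by
    have hAU : (A ⊗ₖ 1) * U = U * ((V * A * star V) ⊗ₖ 1) := by
      rw [← hUV, ← mul_assoc, ← mul_assoc, Unitary.mul_star_self_of_mem hU, one_mul]
    calc U * (V ⊗ₖ 1) * (A ⊗ₖ 1) = U * ((V * A * star V) ⊗ₖ 1) * (V ⊗ₖ 1) := by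
          rw [mul_assoc, mul_assoc, ← mul_kronecker_mul, ← mul_kronecker_mul, mul_assoc (V * A),
            Unitary.star_mul_self_of_mem hV, mul_one, mul_one]
      _ = (A ⊗ₖ 1) * (U * (V ⊗ₖ 1)) := by rw [← hAU, mul_assoc]
  obtain ⟨W, hW⟩ := exists_eq_one_kronecker_of_commute hcomm
  refine ⟨star V, Unitary.star_mem hV, W,
    mem_unitary_of_one_kronecker_mem_unitary (hW ▸ hP), ?_⟩
  calc U = U * (V ⊗ₖ 1) * (star V ⊗ₖ 1) := by
        rw [mul_assoc, ← mul_kronecker_mul, Unitary.mul_star_self_of_mem hV, mul_one,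
          one_kronecker_one, mul_one]
    _ = star V ⊗ₖ W := by rw [hW, ← mul_kronecker_mul, one_mul, mul_one]

end Kronecker

section Channel

variable {n k : Type*} [Fintype k]

theorem trB_kronecker (X : Matrix n n ℂ) (B : Matrix k k ℂ) :
    trB (X ⊗ₖ B) = B.trace • X := by
  ext i j
  simp [trB, trace, Finset.sum_mul, mul_comm (X i j)]

theorem trace_kronecker_one_mul [Fintype n] [DecidableEq k] (A : Matrix n n ℂ)
    (M : Matrix (n × k) (n × k) ℂ) : trace ((A ⊗ₖ 1) * M) = trace (A * trB M) := by
  simp only [trace, diag_apply, mul_apply, kroneckerMap_apply, one_apply, mul_ite, mul_one,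
    mul_zero, ite_mul, zero_mul, Fintype.sum_prod_type, Finset.sum_ite_eq, Finset.mem_univ,
    ↓reduceIte, trB, Finset.mul_sum]
  exact Finset.sum_congr rfl fun _ _ => Finset.sum_comm

theorem channel_kronecker [Fintype n] [DecidableEq k] {V : Matrix n n ℂ} {W : Matrix k k ℂ}
    (hW : Wᴴ * W = 1) (β : Matrix k k ℂ) (ρ : Matrix n n ℂ) :
    channel (V ⊗ₖ W) β ρ = β.trace • (V * ρ * Vᴴ) := by
  rw [channel, conjTranspose_kronecker, ← mul_kronecker_mul, ← mul_kronecker_mul, trB_kronecker,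
    trace_mul_cycle, hW, one_mul]

def channelBilinear [Fintype n] (U : Matrix (n × k) (n × k) ℂ) :
    Matrix k k ℂ →ₗ[ℂ] Matrix n n ℂ →ₗ[ℂ] Matrix n n ℂ :=
  LinearMap.mk₂ ℂ (channel U)
    (fun B₁ B₂ X => by
      ext
      simp [channel, trB, kronecker_add, Matrix.mul_add, Matrix.add_mul, Finset.sum_add_distrib])
    (fun c B X => by ext; simp [channel, trB, kronecker_smul, Finset.mul_sum])
    (fun B X₁ X₂ => by
      ext
      simp [channel, trB, add_kronecker, Matrix.mul_add, Matrix.add_mul, Finset.sum_add_distrib])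
    (fun c B X => by ext; simp [channel, trB, smul_kronecker, Finset.mul_sum])

end Channel

section Density

open scoped MatrixOrder Matrix.Norms.L2Operator

variable {m : Type*} [Fintype m]

theorem isDensity_single [DecidableEq m] (i : m) : IsDensity (single i i (1 : ℂ)) := by
  refine ⟨?_, trace_single_eq_same _ _⟩
  rw [← diagonal_single]
  refine posSemidef_diagonal_iff.mpr fun j => ?_
  by_cases hj : j = i <;> simp [hj]

theorem mem_span_isDensity_of_posSemidef {P : Matrix m m ℂ} (hP : P.PosSemidef) :
    P ∈ Submodule.span ℂ {β : Matrix m m ℂ | IsDensity β} := by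
  by_cases htr : P.trace = 0
  · simp [(hP.trace_eq_zero_iff).mp htr]
  have hinv : 0 ≤ P.trace⁻¹ := (RCLike.inv_pos.mpr (hP.trace_nonneg.lt_of_ne' htr)).le
  rw [← smul_inv_smul₀ htr P]
  exact Submodule.smul_mem _ _ <| Submodule.subset_span
    ⟨hP.smul hinv, by rw [trace_smul, smul_eq_mul, inv_mul_cancel₀ htr]⟩

theorem span_isDensity [DecidableEq m] :
    Submodule.span ℂ {β : Matrix m m ℂ | IsDensity β} = ⊤ := by
  rw [eq_top_iff, ← CStarAlgebra.span_nonneg, Submodule.span_le]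
  exact fun P hP => mem_span_isDensity_of_posSemidef (nonneg_iff_posSemidef.mp hP)

end Density

section Heisenberg

variable {n k : Type*} [Fintype n] [Fintype k] [DecidableEq n] [DecidableEq k]

theorem channel_eq_trace_smul {U : Matrix (n × k) (n × k) ℂ}
    (h : ∀ β γ : Matrix k k ℂ, IsDensity β → IsDensity γ →
      ∀ ρ : Matrix n n ℂ, IsDensity ρ → channel U β ρ = channel U γ ρ)
    {β₀ : Matrix k k ℂ} (hβ₀ : IsDensity β₀) (B : Matrix k k ℂ) (X : Matrix n n ℂ) :
    channel U B X = B.trace • channel U β₀ X := by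
  have hdens β (hβ : IsDensity β) : channelBilinear U β = channelBilinear U β₀ :=
    LinearMap.ext_on span_isDensity fun ρ hρ => h β β₀ hβ hβ₀ ρ hρ
  have key : channelBilinear U = (traceLinearMap k ℂ ℂ).smulRight (channelBilinear U β₀) :=
    LinearMap.ext_on span_isDensity fun β hβ => by
      rw [hdens β hβ, LinearMap.smulRight_apply, traceLinearMap_apply, hβ.2, one_smul]
  exact LinearMap.congr_fun (LinearMap.congr_fun key B) X

theorem conjTranspose_mul_mul_apply {m : Type*} [Fintype m] [DecidableEq m]
    (U M : Matrix m m ℂ) (p q : m) :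
    (Uᴴ * M * U) p q = trace (M * (U * single q p 1 * Uᴴ)) := by
  rw [← mul_assoc, ← mul_assoc, trace_mul_comm, ← mul_assoc, ← mul_assoc, trace_mul_single]
  simp

theorem conjTranspose_mul_kronecker_one_mul {U : Matrix (n × k) (n × k) ℂ}
    {Φ : Matrix n n ℂ → Matrix n n ℂ} (hΦ : ∀ B X, channel U B X = B.trace • Φ X)
    (A : Matrix n n ℂ) :
    Uᴴ * (A ⊗ₖ 1) * U = (of fun a c => trace (A * Φ (single c a 1))) ⊗ₖ 1 := by
  ext ⟨a, b⟩ ⟨c, d⟩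
  have hsingle : single (c, d) (a, b) (1 : ℂ) = single c a 1 ⊗ₖ single d b 1 := by
    rw [single_kronecker_single, one_mul]
  rw [conjTranspose_mul_mul_apply, hsingle, trace_kronecker_one_mul, ← channel, hΦ,
    Matrix.mul_smul, trace_smul]
  by_cases hbd : b = d
  · simp [hbd]
  · simp [hbd, Ne.symm hbd]

end Heisenberg

theorem isUnitary_iff_mem_unitary {m : Type*} [Fintype m] [DecidableEq m] {U : Matrix m m ℂ} :
    IsUnitary U ↔ U ∈ unitary (Matrix m m ℂ) := by
  rw [Unitary.mem_iff, IsUnitary, star_eq_conjTranspose, and_comm]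

/-- a bipartite unitary induces the same channel for all ancilla states
iff it is a tensor product of unitaries. -/
theorem stmt3 (n k : ℕ) (hn : 0 < n) (hk : 0 < k)
    (U : Matrix (Fin n × Fin k) (Fin n × Fin k) ℂ) (hU : IsUnitary U) :
    (∀ β γ : Matrix (Fin k) (Fin k) ℂ, IsDensity β → IsDensity γ →
      ∀ ρ : Matrix (Fin n) (Fin n) ℂ, IsDensity ρ → channel U β ρ = channel U γ ρ)
    ↔ ∃ (V : Matrix (Fin n) (Fin n) ℂ) (W : Matrix (Fin k) (Fin k) ℂ),
        IsUnitary V ∧ IsUnitary W ∧ U = V ⊗ₖ W := by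
  constructor
  · intro h
    have := Fin.pos_iff_nonempty.mp hn
    have := Fin.pos_iff_nonempty.mp hk
    have hΦ := channel_eq_trace_smul h (isDensity_single ⟨0, hk⟩)
    obtain ⟨V, hV, W, hW, rfl⟩ := exists_eq_kronecker_of_conj_kronecker_one
      (isUnitary_iff_mem_unitary.mp hU) fun A => ⟨_, conjTranspose_mul_kronecker_one_mul hΦ A⟩
    exact ⟨V, W, isUnitary_iff_mem_unitary.mpr hV, isUnitary_iff_mem_unitary.mpr hW, rfl⟩
  · rintro ⟨V, W, -, hW, rfl⟩ β γ hβ hγ ρ -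
    rw [channel_kronecker hW.2, channel_kronecker hW.2, hβ.2, hγ.2]

end BipartiteUnitary
end
end

section
/- A unitary operator U on ℂ^n ⊗ ℂ^k is block-diagonal with respect to both tensor factors (U ∈ U^A_block-diag ∩ U^B_block-diag) if and only if U = Σ_{i=1}^s Σ_{j=1}^r λ_{ij} Q_i ⊗ R_j, where |λ_{ij}| = 1 for all i, j, and (Q_i)_{i=1}^s, (R_j)_{j=1}^r are families of partial isometries on ℂ^n and ℂ^k respectively satisfying Σ_{i=1}^s Q_iQ_i* = Σ_{i=1}^s Q_i*Q_i = I_n and Σ_{j=1}^r R_jR_j* = Σ_{j=1}^r R_j*R_j = I_k. -/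
open Matrix Kronecker ComplexOrder

noncomputable section

namespace BipartiteUnitary

/-! If `U = ∑ⱼ Aⱼ ⊗ eⱼfⱼ* = ∑ᵢ gᵢhᵢ* ⊗ Bᵢ`, compressing the second factor between `eⱼ*` and `fⱼ`
gives `Aⱼ = ∑ᵢ λᵢⱼ gᵢhᵢ*` with `λᵢⱼ = eⱼ* Bᵢ fⱼ`; unitarity of `Aⱼ` forces `|λᵢⱼ| = 1`, and the
rank-one maps `gᵢhᵢ*`, `eⱼfⱼ*` are the required partial isometries.

Conversely, the projections `RⱼRⱼ*` (and `Rⱼ*Rⱼ`) sum to `1`, so they are pairwise orthogonal;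
hence `∑ᵢ λᵢⱼ Qᵢ` is unitary, and an orthonormal basis `(eₜ)` in which every `RⱼRⱼ*` is diagonal
splits each `Rⱼ` into rank-one pieces `eₜ(Rⱼ*eₜ)*`. Grouping `U = ∑ⱼ (∑ᵢ λᵢⱼ Qᵢ) ⊗ Rⱼ` along
these pieces exhibits `U ∈ 𝒰^A`, and symmetrically `U ∈ 𝒰^B`. -/

open Finset

section Basics

variable {m : Type*} [Fintype m]

theorem vecMulVec_star_mul_conjTranspose {u w : m → ℂ} (hw : star w ⬝ᵥ w = 1) :
    vecMulVec u (star w) * (vecMulVec u (star w))ᴴ = vecMulVec u (star u) := by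
  rw [conjTranspose_vecMulVec, star_star, vecMulVec_mul_vecMulVec, hw, one_smul]

theorem conjTranspose_mul_vecMulVec_star {u w : m → ℂ} (hu : star u ⬝ᵥ u = 1) :
    (vecMulVec u (star w))ᴴ * vecMulVec u (star w) = vecMulVec w (star w) := by
  rw [conjTranspose_vecMulVec, star_star, vecMulVec_mul_vecMulVec, hu, one_smul]

variable [DecidableEq m] {g : m → m → ℂ}

theorem ONB.star_dotProduct (hg : ONB g) (i j : m) :
    star (g i) ⬝ᵥ g j = if i = j then 1 else 0 :=
  hg i j

theorem ONB.star_dotProduct_self (hg : ONB g) (i : m) : star (g i) ⬝ᵥ g i = 1 :=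
  (hg i i).trans (if_pos rfl)

theorem ONB.sum_vecMulVec_self (hg : ONB g) : ∑ i, vecMulVec (g i) (star (g i)) = 1 := by
  set G : Matrix m m ℂ := (of g)ᵀ
  have hG : Gᴴ * G = 1 := by
    ext i j
    simpa [G, mul_apply, one_apply] using hg i j
  rw [← mul_eq_one_comm.mp hG]
  ext a b
  simp [G, mul_apply, Matrix.sum_apply, vecMulVec_apply]

theorem onb_of_orthonormalBasis (b : OrthonormalBasis m ℂ (EuclideanSpace ℂ m)) :
    ONB fun i => ⇑(b i) := by
  intro i j
  rw [← orthonormal_iff_ite.mp b.orthonormal i j]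
  simp [PiLp.inner_apply, mul_comm]

end Basics

section PartialIso

variable {m ι : Type*} [Fintype m] [DecidableEq m] [Fintype ι]

theorem IsPartialIso.conjTranspose_mul_mul_conjTranspose {R : Matrix m m ℂ}
    (h : IsPartialIso R) : Rᴴ * R * Rᴴ = Rᴴ := by
  simpa [conjTranspose_mul, Matrix.mul_assoc] using congrArg conjTranspose h

theorem IsPartialIso.isStarProjection_mul_conjTranspose {R : Matrix m m ℂ}
    (h : IsPartialIso R) : IsStarProjection (R * Rᴴ) :=
  ⟨by rw [IsIdempotentElem, ← Matrix.mul_assoc, h], IsSelfAdjoint.mul_star_self R⟩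

theorem mul_eq_zero_of_isStarProjection_of_sum_eq_one {P : ι → Matrix m m ℂ}
    (hP : ∀ i, IsStarProjection (P i)) (hsum : ∑ i, P i = 1) {i j : ι} (hij : i ≠ j) :
    P i * P j = 0 := by
  classical
  have hH : ∀ i, (P i)ᴴ = P i := fun i => (hP i).isSelfAdjoint
  have hI : ∀ i, P i * P i = P i := fun i => (hP i).isIdempotentElem
  have htrace : ∀ l, ((P l * P i)ᴴ * (P l * P i)).trace = (P i * P l).trace := fun l => by
    rw [conjTranspose_mul, hH, hH, Matrix.mul_assoc, ← Matrix.mul_assoc (P l), hI,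
      ← Matrix.mul_assoc, trace_mul_comm, ← Matrix.mul_assoc, hI]
  have hrest : ∑ l ∈ univ.erase i, ((P l * P i)ᴴ * (P l * P i)).trace = 0 := by
    have h : ∑ l, (P i * P l).trace = (P i * P i).trace := by
      rw [← trace_sum, ← mul_sum, hsum, mul_one, hI]
    rw [← add_sum_erase _ _ (mem_univ i), add_eq_left] at h
    simpa only [htrace] using h
  have hji : P j * P i = 0 := trace_conjTranspose_mul_self_eq_zero_iff.mp <|
    (sum_eq_zero_iff_of_nonneg fun l _ => (posSemidef_conjTranspose_mul_self _).trace_nonneg).mp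
      hrest j (mem_erase.mpr ⟨hij.symm, mem_univ j⟩)
  simpa [conjTranspose_mul, hH] using congrArg conjTranspose hji

structure IsPartialIsoResolution (R : ι → Matrix m m ℂ) : Prop where
  isPartialIso : ∀ i, IsPartialIso (R i)
  sum_mul_conjTranspose : ∑ i, R i * (R i)ᴴ = 1
  sum_conjTranspose_mul : ∑ i, (R i)ᴴ * R i = 1

theorem isPartialIsoResolution_vecMulVec {g h : m → m → ℂ} (hg : ONB g) (hh : ONB h) :
    IsPartialIsoResolution fun i => vecMulVec (g i) (star (h i)) where
  isPartialIso i := by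
    rw [IsPartialIso, vecMulVec_star_mul_conjTranspose (hh.star_dotProduct_self i),
      vecMulVec_mul_vecMulVec, hg.star_dotProduct_self i, one_smul]
  sum_mul_conjTranspose := by
    simp_rw [vecMulVec_star_mul_conjTranspose (hh.star_dotProduct_self _)]
    exact hg.sum_vecMulVec_self
  sum_conjTranspose_mul := by
    simp_rw [conjTranspose_mul_vecMulVec_star (hg.star_dotProduct_self _)]
    exact hh.sum_vecMulVec_self

namespace IsPartialIsoResolution

variable {R : ι → Matrix m m ℂ} (hR : IsPartialIsoResolution R)
include hR

theorem conjTranspose : IsPartialIsoResolution fun i => (R i)ᴴ where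
  isPartialIso i := by
    simpa [IsPartialIso] using (hR.isPartialIso i).conjTranspose_mul_mul_conjTranspose
  sum_mul_conjTranspose := by simpa using hR.sum_conjTranspose_mul
  sum_conjTranspose_mul := by simpa using hR.sum_mul_conjTranspose

theorem conjTranspose_mul_eq_zero {i j : ι} (hij : i ≠ j) : (R i)ᴴ * R j = 0 := by
  have hP : R i * (R i)ᴴ * (R j * (R j)ᴴ) = 0 :=
    mul_eq_zero_of_isStarProjection_of_sum_eq_one
      (fun l => (hR.isPartialIso l).isStarProjection_mul_conjTranspose) hR.sum_mul_conjTranspose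
      hij
  calc (R i)ᴴ * R j = ((R i)ᴴ * R i * (R i)ᴴ) * (R j * (R j)ᴴ * R j) := by
        rw [(hR.isPartialIso i).conjTranspose_mul_mul_conjTranspose, hR.isPartialIso j]
    _ = (R i)ᴴ * (R i * (R i)ᴴ * (R j * (R j)ᴴ)) * R j := by simp only [Matrix.mul_assoc]
    _ = 0 := by rw [hP, Matrix.mul_zero, Matrix.zero_mul]

theorem mul_conjTranspose_eq_zero {i j : ι} (hij : i ≠ j) : R i * (R j)ᴴ = 0 := by
  simpa using hR.conjTranspose.conjTranspose_mul_eq_zero hij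

theorem sum_smul_mul_conjTranspose {c : ι → ℂ} (hc : ∀ i, ‖c i‖ = 1) :
    (∑ i, c i • R i) * (∑ i, c i • R i)ᴴ = 1 := by
  classical
  rw [conjTranspose_sum, sum_mul_sum, ← hR.sum_mul_conjTranspose]
  refine sum_congr rfl fun i _ => ?_
  rw [sum_eq_single i (fun j _ hji => by simp [hR.mul_conjTranspose_eq_zero hji.symm])
    (by simp), conjTranspose_smul, smul_mul_smul, ← starRingEnd_apply, Complex.mul_conj',
    hc i]
  simp

theorem isUnitary_sum_smul {c : ι → ℂ} (hc : ∀ i, ‖c i‖ = 1) :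
    IsUnitary (∑ i, c i • R i) := by
  refine ⟨hR.sum_smul_mul_conjTranspose hc, ?_⟩
  simpa [conjTranspose_sum] using
    hR.conjTranspose.sum_smul_mul_conjTranspose (c := star c) (by simpa using hc)

end IsPartialIsoResolution

end PartialIso

section Decomposition

variable {m ι : Type*} [Fintype m]

theorem mulVec_eq_zero_of_mul_eq_smul {𝕜 : Type*} [Field 𝕜] {P H : Matrix m m 𝕜} {a μ : 𝕜}
    {v : m → 𝕜} (hPH : P * H = a • P) (hv : H *ᵥ v = μ • v) (hne : μ ≠ a) : P *ᵥ v = 0 := by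
  have h : (μ - a) • (P *ᵥ v) = 0 := by
    rw [sub_smul, ← mulVec_smul, ← hv, mulVec_mulVec, hPH, smul_mulVec, sub_self]
  exact (smul_eq_zero.mp h).resolve_left (sub_ne_zero.mpr hne)

variable [DecidableEq m] [Fintype ι]

theorem exists_onb_adapted_of_sum_eq_one {P : ι → Matrix m m ℂ}
    (hP : ∀ i, IsStarProjection (P i)) (hsum : ∑ i, P i = 1) :
    ∃ (v : m → m → ℂ) (jm : m → ι), ONB v ∧ ∀ t, P (jm t) *ᵥ v t = v t := by
  -- each eigenvector of `∑ cᵢ Pᵢ`, for distinct real `cᵢ`, lies in the range of exactly one `Pᵢ`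
  set c : ι → ℂ := fun i => ((Fintype.equivFin ι i : ℕ) : ℂ)
  have hc : Function.Injective c := fun i j h =>
    (Fintype.equivFin ι).injective (Fin.ext (Nat.cast_injective (R := ℂ) h))
  set H := ∑ i, c i • P i
  have hHerm : H.IsHermitian := by
    have hH : ∀ i, (P i)ᴴ = P i := fun i => (hP i).isSelfAdjoint
    simp [H, IsHermitian, conjTranspose_sum, hH, c]
  have hPH : ∀ j, P j * H = c j • P j := fun j => by
    rw [mul_sum, sum_eq_single j (fun l _ hlj => by
      rw [Matrix.mul_smul, mul_eq_zero_of_isStarProjection_of_sum_eq_one hP hsum hlj.symm,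
        smul_zero]) (by simp), Matrix.mul_smul, (hP j).isIdempotentElem.eq]
  set v : m → m → ℂ := fun t => ⇑(hHerm.eigenvectorBasis t)
  have hv : ONB v := onb_of_orthonormalBasis _
  have hkill : ∀ t j, (hHerm.eigenvalues t : ℂ) ≠ c j → P j *ᵥ v t = 0 := fun t j hne =>
    mulVec_eq_zero_of_mul_eq_smul (hPH j) (by simpa using hHerm.mulVec_eigenvectorBasis t) hne
  have hsum_v : ∀ t, ∑ j, P j *ᵥ v t = v t := fun t => by
    rw [← sum_mulVec, hsum, one_mulVec]
  have hex : ∀ t, ∃ j, (hHerm.eigenvalues t : ℂ) = c j := by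
    intro t
    by_contra! h
    have hzero : v t = 0 := (hsum_v t).symm.trans (sum_eq_zero fun j _ => hkill t j (h j))
    simpa [hzero] using hv.star_dotProduct_self t
  choose jm hjm using hex
  refine ⟨v, jm, hv, fun t => ?_⟩
  calc P (jm t) *ᵥ v t = ∑ j, P j *ᵥ v t :=
        (sum_eq_single _ (fun j _ hj => hkill t j (hjm t ▸ hc.ne hj.symm)) (by simp)).symm
    _ = v t := hsum_v t

theorem IsPartialIsoResolution.exists_onb_decomposition [DecidableEq ι]
    {R : ι → Matrix m m ℂ} (hR : IsPartialIsoResolution R) :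
    ∃ (jm : m → ι) (e f : m → m → ℂ), ONB e ∧ ONB f ∧
      ∀ j, R j = ∑ t, if jm t = j then vecMulVec (e t) (star (f t)) else 0 := by
  obtain ⟨v, jm, hv, hPv⟩ := exists_onb_adapted_of_sum_eq_one (P := fun j => R j * (R j)ᴴ)
    (fun j => (hR.isPartialIso j).isStarProjection_mul_conjTranspose) hR.sum_mul_conjTranspose
  set f : m → m → ℂ := fun t => (R (jm t))ᴴ *ᵥ v t
  have hRv : ∀ t j, (R j)ᴴ *ᵥ v t = if jm t = j then f t else 0 := by
    intro t j
    split_ifs with h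
    · rw [← h]
    · rw [← hPv t, mulVec_mulVec, ← Matrix.mul_assoc, hR.conjTranspose_mul_eq_zero (Ne.symm h),
        Matrix.zero_mul, zero_mulVec]
  have hf : ONB f := by
    intro i j
    change star (f i) ⬝ᵥ f j = _
    rw [star_mulVec, conjTranspose_conjTranspose, ← dotProduct_mulVec, mulVec_mulVec]
    by_cases h : jm i = jm j
    · rw [h, hPv j]
      exact hv i j
    · rw [hR.mul_conjTranspose_eq_zero h, zero_mulVec, dotProduct_zero,
        if_neg (fun hij => h (congrArg jm hij))]
  refine ⟨jm, v, f, hv, hf, fun j => ?_⟩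
  calc R j = (∑ t, vecMulVec (v t) (star (v t))) * R j := by
        rw [hv.sum_vecMulVec_self, Matrix.one_mul]
    _ = ∑ t, vecMulVec (v t) (star ((R j)ᴴ *ᵥ v t)) := by
        simp_rw [sum_mul, vecMulVec_mul, star_mulVec, conjTranspose_conjTranspose]
    _ = _ := by
        refine sum_congr rfl fun t _ => ?_
        rw [hRv]
        split_ifs <;> simp

end Decomposition

section BlockDiagonal

theorem kronecker_sum {α l m p q ι : Type*} [NonUnitalNonAssocSemiring α] (s : Finset ι)
    (A : Matrix l m α) (B : ι → Matrix p q α) : A ⊗ₖ (∑ i ∈ s, B i) = ∑ i ∈ s, A ⊗ₖ B i := by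
  ext
  simp [Matrix.sum_apply, mul_sum]

theorem sum_kronecker {α l m p q ι : Type*} [NonUnitalNonAssocSemiring α] (s : Finset ι)
    (A : ι → Matrix l m α) (B : Matrix p q α) : (∑ i ∈ s, A i) ⊗ₖ B = ∑ i ∈ s, A i ⊗ₖ B := by
  ext
  simp [Matrix.sum_apply, sum_mul]

variable {n k : ℕ} {ι : Type*} [Fintype ι]

theorem memUA_sum_kronecker {M : ι → Matrix (Fin n) (Fin n) ℂ} {R : ι → Matrix (Fin k) (Fin k) ℂ}
    (hM : ∀ j, IsUnitary (M j)) (hR : IsPartialIsoResolution R) : memUA (∑ j, M j ⊗ₖ R j) := by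
  classical
  obtain ⟨jm, e, f, he, hf, hRdec⟩ := hR.exists_onb_decomposition
  refine ⟨fun t => M (jm t), e, f, fun t => hM (jm t), he, hf, ?_⟩
  calc ∑ j, M j ⊗ₖ R j
      = ∑ j, ∑ t, if jm t = j then M j ⊗ₖ vecMulVec (e t) (star (f t)) else 0 := by
        refine sum_congr rfl fun j _ => ?_
        rw [hRdec, kronecker_sum]
        exact sum_congr rfl fun t _ => by split_ifs <;> simp
    _ = _ := by rw [sum_comm]; simp

theorem memUB_sum_kronecker {Q : ι → Matrix (Fin n) (Fin n) ℂ} {N : ι → Matrix (Fin k) (Fin k) ℂ}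
    (hQ : IsPartialIsoResolution Q) (hN : ∀ j, IsUnitary (N j)) : memUB (∑ j, Q j ⊗ₖ N j) := by
  classical
  obtain ⟨jm, e, f, he, hf, hQdec⟩ := hQ.exists_onb_decomposition
  refine ⟨fun t => N (jm t), e, f, fun t => hN (jm t), he, hf, ?_⟩
  calc ∑ j, Q j ⊗ₖ N j
      = ∑ j, ∑ t, if jm t = j then vecMulVec (e t) (star (f t)) ⊗ₖ N j else 0 := by
        refine sum_congr rfl fun j _ => ?_
        rw [hQdec, sum_kronecker]
        exact sum_congr rfl fun t _ => by split_ifs <;> simp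
    _ = _ := by rw [sum_comm]; simp

end BlockDiagonal

section Compression

variable {l p : Type*} [Fintype p]

/-- `compressRight x y M = (1 ⊗ x) M (1 ⊗ y)` for a row vector `x` and a column vector `y`. -/
def compressRight (x y : p → ℂ) : Matrix (l × p) (l × p) ℂ →ₗ[ℂ] Matrix l l ℂ where
  toFun M := of fun a b => ∑ s, ∑ t, x s * M (a, s) (b, t) * y t
  map_add' M N := by
    ext
    simp [mul_add, add_mul, sum_add_distrib]
  map_smul' c M := by
    ext
    simp only [Matrix.smul_apply, of_apply, RingHom.id_apply, smul_eq_mul, mul_sum]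
    exact sum_congr rfl fun s _ => sum_congr rfl fun t _ => by ring

theorem compressRight_kronecker (x y : p → ℂ) (A : Matrix l l ℂ) (B : Matrix p p ℂ) :
    compressRight x y (A ⊗ₖ B) = (x ⬝ᵥ B *ᵥ y) • A := by
  ext a b
  simp only [compressRight, LinearMap.coe_mk, AddHom.coe_mk, of_apply, kronecker_apply,
    Matrix.smul_apply, smul_eq_mul, dotProduct, mulVec, mul_sum, sum_mul]
  exact sum_congr rfl fun s _ => sum_congr rfl fun t _ => by ring

theorem compressRight_sum_kronecker_vecMulVec [DecidableEq p] {e f : p → p → ℂ} (he : ONB e)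
    (hf : ONB f) (A : p → Matrix l l ℂ) (j : p) :
    compressRight (star (e j)) (f j) (∑ i, A i ⊗ₖ vecMulVec (e i) (star (f i))) = A j := by
  simp [compressRight_kronecker, vecMulVec_mulVec, he.star_dotProduct, hf.star_dotProduct,
    apply_ite]

end Compression

theorem norm_eq_one_of_isUnitary_sum_smul_vecMulVec {m : Type*} [Fintype m] [DecidableEq m]
    {g h : m → m → ℂ} (hg : ONB g) (hh : ONB h) {c : m → ℂ}
    (hU : IsUnitary (∑ i, c i • vecMulVec (g i) (star (h i)))) (i : m) : ‖c i‖ = 1 := by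
  set M := ∑ i, c i • vecMulVec (g i) (star (h i))
  have hMh : M *ᵥ h i = c i • g i := by
    simp [M, sum_mulVec, smul_mulVec, vecMulVec_mulVec, hh.star_dotProduct]
  have hnorm : star (M *ᵥ h i) ⬝ᵥ (M *ᵥ h i) = 1 := by
    rw [star_mulVec, ← dotProduct_mulVec, mulVec_mulVec, hU.2, one_mulVec,
      hh.star_dotProduct_self]
  rw [hMh, star_smul, smul_dotProduct, dotProduct_smul, hg.star_dotProduct_self] at hnorm
  rw [smul_eq_mul, smul_eq_mul, mul_one, ← starRingEnd_apply, Complex.conj_mul'] at hnorm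
  exact (pow_eq_one_iff_of_nonneg (norm_nonneg _) two_ne_zero).mp (by exact_mod_cast hnorm)

theorem exists_eq_sum_smul_kronecker_of_memUA_of_memUB {n k : ℕ}
    {U : Matrix (Fin n × Fin k) (Fin n × Fin k) ℂ} (hA : memUA U) (hB : memUB U) :
    ∃ (c : Fin n → Fin k → ℂ) (g h : Fin n → Fin n → ℂ) (e f : Fin k → Fin k → ℂ),
      ONB g ∧ ONB h ∧ ONB e ∧ ONB f ∧ (∀ i j, ‖c i j‖ = 1) ∧
      U = ∑ i, ∑ j, c i j • (vecMulVec (g i) (star (h i)) ⊗ₖ vecMulVec (e j) (star (f j))) := by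
  obtain ⟨A, e, f, hA, he, hf, rfl⟩ := hA
  obtain ⟨B, g, h, -, hg, hh, hB⟩ := hB
  set c : Fin n → Fin k → ℂ := fun i j => star (e j) ⬝ᵥ B i *ᵥ f j
  have hblock : ∀ j, A j = ∑ i, c i j • vecMulVec (g i) (star (h i)) := fun j => by
    rw [← compressRight_sum_kronecker_vecMulVec he hf A j, hB, map_sum]
    simp_rw [compressRight_kronecker, c]
  refine ⟨c, g, h, e, f, hg, hh, he, hf, fun i j =>
    norm_eq_one_of_isUnitary_sum_smul_vecMulVec hg hh (hblock j ▸ hA j) i, ?_⟩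
  rw [sum_comm]
  refine sum_congr rfl fun j _ => ?_
  simp_rw [hblock j, sum_kronecker, smul_kronecker]

theorem stmt16_general (n k : ℕ)
    (U : Matrix (Fin n × Fin k) (Fin n × Fin k) ℂ) :
    (memUA U ∧ memUB U) ↔
      ∃ (s r : ℕ) (lam : Fin s → Fin r → ℂ)
        (Q : Fin s → Matrix (Fin n) (Fin n) ℂ)
        (R : Fin r → Matrix (Fin k) (Fin k) ℂ),
        (∀ i j, ‖lam i j‖ = 1) ∧
        (∀ i, IsPartialIso (Q i)) ∧ (∀ j, IsPartialIso (R j)) ∧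
        (∑ i, Q i * (Q i)ᴴ) = 1 ∧ (∑ i, (Q i)ᴴ * Q i) = 1 ∧
        (∑ j, R j * (R j)ᴴ) = 1 ∧ (∑ j, (R j)ᴴ * R j) = 1 ∧
        U = ∑ i, ∑ j, lam i j • (Q i ⊗ₖ R j) := by
  constructor
  · rintro ⟨hA, hB⟩
    obtain ⟨c, g, h, e, f, hg, hh, he, hf, hc, rfl⟩ :=
      exists_eq_sum_smul_kronecker_of_memUA_of_memUB hA hB
    obtain ⟨hQ, hQ1, hQ2⟩ := isPartialIsoResolution_vecMulVec hg hh
    obtain ⟨hR, hR1, hR2⟩ := isPartialIsoResolution_vecMulVec he hf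
    exact ⟨n, k, c, _, _, hc, hQ, hR, hQ1, hQ2, hR1, hR2, rfl⟩
  · rintro ⟨s, r, lam, Q, R, hlam, hQ, hR, hQ1, hQ2, hR1, hR2, rfl⟩
    have hQ' : IsPartialIsoResolution Q := ⟨hQ, hQ1, hQ2⟩
    have hR' : IsPartialIsoResolution R := ⟨hR, hR1, hR2⟩
    constructor
    · rw [sum_comm]
      simp_rw [← smul_kronecker, ← sum_kronecker]
      exact memUA_sum_kronecker (fun j => hQ'.isUnitary_sum_smul fun i => hlam i j) hR'
    · simp_rw [← kronecker_smul, ← kronecker_sum]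
      exact memUB_sum_kronecker hQ' fun i => hR'.isUnitary_sum_smul fun j => hlam i j

/-- a bipartite unitary is block-diagonal with respect to both tensor
factors iff `U = ∑_{i,j} λ_{ij} Q_i ⊗ R_j` with unimodular `λ_{ij}` and families of
partial isometries summing to the identity on each side. -/
theorem stmt16 (n k : ℕ)
    (U : Matrix (Fin n × Fin k) (Fin n × Fin k) ℂ) (hU : IsUnitary U) :
    (memUA U ∧ memUB U) ↔
      ∃ (s r : ℕ) (lam : Fin s → Fin r → ℂ)
        (Q : Fin s → Matrix (Fin n) (Fin n) ℂ)
        (R : Fin r → Matrix (Fin k) (Fin k) ℂ),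
        (∀ i j, ‖lam i j‖ = 1) ∧
        (∀ i, IsPartialIso (Q i)) ∧ (∀ j, IsPartialIso (R j)) ∧
        (∑ i, Q i * (Q i)ᴴ) = 1 ∧ (∑ i, (Q i)ᴴ * Q i) = 1 ∧
        (∑ j, R j * (R j)ᴴ) = 1 ∧ (∑ j, (R j)ᴴ * R j) = 1 ∧
        U = ∑ i, ∑ j, lam i j • (Q i ⊗ₖ R j) :=
  stmt16_general n k U

end BipartiteUnitary
end
end
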